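/- Let G be a finite simple graph, x a C3-free vertex of G with closed neighborhood X = N[x], and A = A1 ∪ A2 a separable γ-set of G with A1 dominating V(G) − A. If A ∩ X = {v} for a single vertex v and v ∈ A2, then A is not effective under any permutation π of V(G) that fixes every vertex of V(G) − X pointwise and moves every vertex of X. -/

import Mathlib

/-!
Since `A ∩ N[x] = {v}` and `v ∉ A₁`, the set `A₁` misses `N[x]`; as `A₁` dominates `V − A`,
this forces `x ∈ A`, i.e. `v = x`. Then `π x ∈ N[x] − {x}` lies outside `A`, so it has a
neighbour `u ∈ A₁`, which lies outside `N[x]` and is therefore fixed by `π`. Now `u ∈ π(A)` but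
`u ∉ π(A₂)`, and `u` is dominated by `π x ∈ π(A)`; since `π(A₂)` dominates `V − π(A)`, the
smaller set `π(A) − {u}` is still dominating, contradicting `|π(A)| = γ(G)`.
-/

open SimpleGraph

variable {V : Type*}

/-- `D` is a dominating set of `G`: every vertex is in `D` or adjacent to a vertex of `D`. -/
def IsDomSet (G : SimpleGraph V) (D : Set V) : Prop :=
  ∀ v : V, ∃ d ∈ D, d = v ∨ G.Adj d v

/-- The domination number of `G`: minimum cardinality of a dominating set. -/
noncomputable def domNum (G : SimpleGraph V) : ℕ :=
  sInf {n | ∃ D : Set V, IsDomSet G D ∧ D.ncard = n}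

/-- The prism `πG` of `G`: two disjoint copies of `G` together with the matching
`{u (π u) : u ∈ V(G)}`, the second copy playing the role of `G'`. -/
def prism (G : SimpleGraph V) (π : Equiv.Perm V) : SimpleGraph (V ⊕ V) where
  Adj a b :=
    match a, b with
    | Sum.inl u, Sum.inl v => G.Adj u v
    | Sum.inr u, Sum.inr v => G.Adj u v
    | Sum.inl u, Sum.inr v => π u = v
    | Sum.inr u, Sum.inl v => π v = u
  symm := ⟨by
    rintro (u | u) (v | v) h
    · exact G.adj_symm h
    · exact h
    · exact h
    · exact G.adj_symm h⟩
  loopless := ⟨by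
    rintro (u | u) h
    · exact G.irrefl h
    · exact G.irrefl h⟩

/-- The closed neighborhood `N[v]` of a vertex. -/
def closedNbhd (G : SimpleGraph V) (v : V) : Set V :=
  insert v (G.neighborSet v)

/-- `x` is a `C₃`-free vertex: non-isolated and belonging to no triangle of `G`. -/
def C3Free (G : SimpleGraph V) (x : V) : Prop :=
  (∃ y, G.Adj x y) ∧ ∀ u v : V, G.Adj x u → G.Adj x v → ¬ G.Adj u v

/-- `A = A1 ∪ A2` is a separable γ-set of `G` (an `A1`-γ-set): `A1, A2` are nonempty,
disjoint, `A` is a γ-set, and `A1` dominates `V(G) - A`. -/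
def SepGammaSet (G : SimpleGraph V) (A1 A2 : Set V) : Prop :=
  A1.Nonempty ∧ A2.Nonempty ∧ Disjoint A1 A2 ∧
  IsDomSet G (A1 ∪ A2) ∧ (A1 ∪ A2).ncard = domNum G ∧
  ∀ v ∉ A1 ∪ A2, ∃ u ∈ A1, G.Adj u v

/-- The separable γ-set `A = A1 ∪ A2` is effective under `π`: `π(A)` is a γ-set of the
copy `G'` of `G` (identified with `G`) whose dominating part is `B2' = π(A2)`,
i.e. `π(A2)` dominates `V(G') - π(A)`. -/
def Effective (G : SimpleGraph V) (π : Equiv.Perm V) (A1 A2 : Set V) : Prop :=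
  IsDomSet G (⇑π '' (A1 ∪ A2)) ∧ (⇑π '' (A1 ∪ A2)).ncard = domNum G ∧
  ∀ v ∉ ⇑π '' (A1 ∪ A2), ∃ u ∈ ⇑π '' A2, G.Adj u v

/-- The star `K_{1,m}` on `Fin (m+1)`, with center `0` adjacent to the `m` leaves. -/
def starGraph (m : ℕ) : SimpleGraph (Fin (m + 1)) where
  Adj a b := (a = 0 ∧ b ≠ 0) ∨ (b = 0 ∧ a ≠ 0)
  symm := ⟨fun a b h => Or.symm h⟩
  loopless := ⟨fun a h => by rcases h with ⟨h1, h2⟩ | ⟨h1, h2⟩ <;> exact h2 h1⟩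

section DominatingSets

variable {G : SimpleGraph V}

theorem domNum_le_ncard {D : Set V} (hD : IsDomSet G D) : domNum G ≤ D.ncard :=
  Nat.sInf_le ⟨D, hD, rfl⟩

theorem not_isDomSet_diff_singleton [Finite V] {D : Set V} (hD : D.ncard = domNum G) {u : V}
    (hu : u ∈ D) : ¬ IsDomSet G (D \ {u}) := by
  intro hdom
  have hle := domNum_le_ncard hdom
  have hpos : 0 < D.ncard := (Set.ncard_pos D.toFinite).mpr ⟨u, hu⟩
  rw [Set.ncard_sdiff_singleton_of_mem hu, hD] at hle
  omega

theorem isDomSet_diff_singleton {D D₂ : Set V} (hD₂ : D₂ ⊆ D)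
    (hdom : ∀ w ∉ D, ∃ z ∈ D₂, G.Adj z w) {u w : V} (hu : u ∉ D₂) (hw : w ∈ D)
    (hwu : G.Adj w u) : IsDomSet G (D \ {u}) := by
  intro y
  by_cases hyD : y ∈ D
  · by_cases hyu : y = u
    · subst hyu
      exact ⟨w, ⟨hw, hwu.ne⟩, Or.inr hwu⟩
    · exact ⟨y, ⟨hyD, hyu⟩, Or.inl rfl⟩
  · obtain ⟨z, hz, hzy⟩ := hdom y hyD
    exact ⟨z, ⟨hD₂ hz, fun h => hu (h ▸ hz)⟩, Or.inr hzy⟩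

theorem Equiv.Perm.apply_mem_of_forall_notMem_apply_eq {α : Type*} {S : Set α}
    (π : Equiv.Perm α) (hfix : ∀ w ∉ S, π w = w) {w : α} (hw : w ∈ S) : π w ∈ S := by
  by_contra h
  have hπw : π w = w := π.injective (hfix _ h)
  exact h (by rwa [hπw])

section InterClosedNbhd

variable {x v : V} {A₁ A₂ : Set V}

theorem notMem_closedNbhd_of_inter_eq_singleton (hAX : (A₁ ∪ A₂) ∩ closedNbhd G x = {v})
    (hv : v ∉ A₁) {a : V} (ha : a ∈ A₁) : a ∉ closedNbhd G x := fun haX => by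
  have hav : a ∈ ({v} : Set V) := hAX ▸ ⟨Or.inl ha, haX⟩
  exact hv (Set.mem_singleton_iff.mp hav ▸ ha)

theorem eq_of_inter_closedNbhd_eq_singleton (hAX : (A₁ ∪ A₂) ∩ closedNbhd G x = {v})
    (hv : v ∉ A₁) (hA₁ : ∀ w ∉ A₁ ∪ A₂, ∃ u ∈ A₁, G.Adj u w) : v = x := by
  have hxX : x ∈ closedNbhd G x := Set.mem_insert x _
  have hxA : x ∈ A₁ ∪ A₂ := by
    by_contra hxA
    obtain ⟨u, hu, hux⟩ := hA₁ x hxA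
    exact notMem_closedNbhd_of_inter_eq_singleton hAX hv hu (Set.mem_insert_of_mem _ hux.symm)
  have hxv : x ∈ ({v} : Set V) := hAX ▸ ⟨hxA, hxX⟩
  exact (Set.mem_singleton_iff.mp hxv).symm

end InterClosedNbhd

end DominatingSets

theorem case_one_vertex_in_A2_general [Fintype V] (G : SimpleGraph V) (x : V)
    (A1 A2 : Set V) (hsep : SepGammaSet G A1 A2) (v : V)
    (hAX : (A1 ∪ A2) ∩ closedNbhd G x = {v}) (hv : v ∈ A2) :
    ∀ π : Equiv.Perm V, (∀ w ∉ closedNbhd G x, π w = w) →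
      (∀ w ∈ closedNbhd G x, π w ≠ w) → ¬ Effective G π A1 A2 := by
  rintro π hfix hmove ⟨-, hcardπ, hπdom⟩
  obtain ⟨-, -, hdisj, -, -, hA₁dom⟩ := hsep
  have hvA₁ : v ∉ A1 := Set.disjoint_right.mp hdisj hv
  obtain rfl : v = x := eq_of_inter_closedNbhd_eq_singleton hAX hvA₁ hA₁dom
  have hvX : v ∈ closedNbhd G v := Set.mem_insert v _
  have hπvA : π v ∉ A1 ∪ A2 := fun h => by
    have hπv : π v ∈ ({v} : Set V) := hAX ▸ ⟨h, π.apply_mem_of_forall_notMem_apply_eq hfix hvX⟩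
    exact hmove v hvX hπv
  obtain ⟨u, huA₁, huv⟩ := hA₁dom (π v) hπvA
  have hπu : π u = u := hfix u (notMem_closedNbhd_of_inter_eq_singleton hAX hvA₁ huA₁)
  have hu : u ∉ π '' A2 := by
    rintro ⟨a, ha, hau⟩
    have hau' : a = u := π.injective (hau.trans hπu.symm)
    exact Set.disjoint_left.mp hdisj huA₁ (hau' ▸ ha)
  exact not_isDomSet_diff_singleton hcardπ ⟨u, Or.inl huA₁, hπu⟩ <|
    isDomSet_diff_singleton (Set.image_mono Set.subset_union_right) hπdom hu
      ⟨v, Or.inr hv, rfl⟩ huv.symm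

/-- Case 1(2): if `A ∩ X = {v}` with `v ∈ A2`, then `A` is not effective
under any permutation fixing `V - X` pointwise and moving every vertex of `X`. -/
theorem case_one_vertex_in_A2 [Fintype V] (G : SimpleGraph V) (x : V) (hx : C3Free G x)
    (A1 A2 : Set V) (hsep : SepGammaSet G A1 A2) (v : V)
    (hAX : (A1 ∪ A2) ∩ closedNbhd G x = {v}) (hv : v ∈ A2) :
    ∀ π : Equiv.Perm V, (∀ w ∉ closedNbhd G x, π w = w) →
      (∀ w ∈ closedNbhd G x, π w ≠ w) → ¬ Effective G π A1 A2 :=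
  case_one_vertex_in_A2_general G x A1 A2 hsep v hAX hv
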